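/- arXiv:2207.02675 — 2 statements merged into one kernel-verified Lean document; each statement's English description precedes it below -/
import Mathlib

section
/- Let S = S_{a,d,k} as above. Then the set of maximal elements of Ap(S, {a, a+kd}) with respect to the partial order x ⪯_S y ⟺ y − x ∈ S is exactly {a+d, a+2d, …, a+(k−1)d}. Consequently the set of quasi-Frobenius elements of S is {−(a+d), −(a+2d), …, −(a+(k−1)d)} and has cardinality k−1. -/
/-- The generators `a, a+d, …, a+kd`, viewed in `ℤ × ℤ` (elements of `ℕ²` are encoded as
nonnegative elements of `ℤ × ℤ`, so that differences make sense). -/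
def gensSet (a d : ℤ × ℤ) (k : ℕ) : Set (ℤ × ℤ) :=
  {x | ∃ i : ℕ, i ≤ k ∧ x = a + (i : ℤ) • d}

/-- The affine semigroup `S_{a,d,k} = ⟨a, a+d, …, a+kd⟩`. -/
def Sadk (a d : ℤ × ℤ) (k : ℕ) : AddSubmonoid (ℤ × ℤ) :=
  AddSubmonoid.closure (gensSet a d k)

/-- `a` and `d` are linearly independent over `ℚ`. -/
def qLinIndep (a d : ℤ × ℤ) : Prop :=
  LinearIndependent ℚ ![((a.1 : ℚ), (a.2 : ℚ)), ((d.1 : ℚ), (d.2 : ℚ))]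

/-- The generating set `a, a+d, …, a+kd` is minimal: no generator lies in the submonoid
generated by the others. -/
def minGen (a d : ℤ × ℤ) (k : ℕ) : Prop :=
  ∀ i : ℕ, i ≤ k →
    a + (i : ℤ) • d ∉
      AddSubmonoid.closure {x : ℤ × ℤ | ∃ j : ℕ, j ≤ k ∧ j ≠ i ∧ x = a + (j : ℤ) • d}

/-- The Apéry set `Ap(S, E) = {x ∈ S | ∀ e ∈ E, x − e ∉ S}`. -/
def aperySet (S : AddSubmonoid (ℤ × ℤ)) (E : Set (ℤ × ℤ)) : Set (ℤ × ℤ) :=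
  {x | x ∈ S ∧ ∀ e ∈ E, x - e ∉ S}

/-- The maximal elements of a subset `T ⊆ ℤ²` with respect to the order `x ⪯_S y ↔ y − x ∈ S`. -/
def maxElems (S : AddSubmonoid (ℤ × ℤ)) (T : Set (ℤ × ℤ)) : Set (ℤ × ℤ) :=
  {x | x ∈ T ∧ ∀ y ∈ T, y - x ∈ S → y = x}

lemma indep_int {a d : ℤ × ℤ} (hli : qLinIndep a d) :
    ∀ p q : ℤ, p • a + q • d = 0 → p = 0 ∧ q = 0 := by
  intro p q h
  have h1 : p * a.1 + q * d.1 = 0 := by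
    have := congrArg Prod.fst h
    simpa [smul_eq_mul] using this
  have h2 : p * a.2 + q * d.2 = 0 := by
    have := congrArg Prod.snd h
    simpa [smul_eq_mul] using this
  have h' := LinearIndependent.pair_iff.mp hli (p : ℚ) (q : ℚ) (by
    apply Prod.ext <;> simp [smul_eq_mul] <;> exact_mod_cast congrArg (Int.cast : ℤ → ℚ) (by assumption))
  exact ⟨by exact_mod_cast h'.1, by exact_mod_cast h'.2⟩

lemma exists_rep {a d : ℤ × ℤ} {k : ℕ} {x : ℤ × ℤ} (hx : x ∈ Sadk a d k) :
    ∃ m n : ℕ, n ≤ m * k ∧ x = (m : ℤ) • a + (n : ℤ) • d := by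
  induction hx using AddSubmonoid.closure_induction with
  | mem y hy => obtain ⟨i, hik, rfl⟩ := hy; exact ⟨1, i, by simpa using hik, by module⟩
  | zero => exact ⟨0, 0, by simp, by simp⟩
  | add x y hx hy ihx ihy =>
      obtain ⟨m, n, hmn, rfl⟩ := ihx
      obtain ⟨m', n', hmn', rfl⟩ := ihy
      refine ⟨m + m', n + n', by nlinarith, by push_cast; module⟩

lemma nat_mem {a d : ℤ × ℤ} {k : ℕ} (m n : ℕ) (hn : n ≤ m * k) :
    (m : ℤ) • a + (n : ℤ) • d ∈ Sadk a d k := by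
  induction m generalizing n with
  | zero =>
      have : n = 0 := by omega
      subst this; simpa using (Sadk a d k).zero_mem
  | succ m ih =>
      have hmem : a + ((min n k : ℕ) : ℤ) • d ∈ Sadk a d k :=
        AddSubmonoid.subset_closure ⟨min n k, min_le_right _ _, rfl⟩
      have hle : n - min n k ≤ m * k := by
        have : n ≤ m * k + k := by rw [Nat.succ_mul] at hn; exact hn
        omega
      have h2 := ih (n - min n k) hle
      have hc : ((n - min n k : ℕ) : ℤ) = (n : ℤ) - (min n k : ℕ) := by omega
      have he : ((m + 1 : ℕ) : ℤ) • a + (n : ℤ) • d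
          = (a + ((min n k : ℕ) : ℤ) • d) + ((m : ℤ) • a + ((n - min n k : ℕ) : ℤ) • d) := by
        rw [hc]; push_cast; module
      rw [he]
      exact (Sadk a d k).add_mem hmem h2

lemma mem_Sadk {a d : ℤ × ℤ} {k : ℕ} (hli : qLinIndep a d) (p q : ℤ) :
    p • a + q • d ∈ Sadk a d k ↔ 0 ≤ p ∧ 0 ≤ q ∧ q ≤ p * k := by
  constructor
  · intro h
    obtain ⟨m, n, hmn, he⟩ := exists_rep h
    have hu : p - (m : ℤ) = 0 ∧ q - (n : ℤ) = 0 := by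
      apply indep_int hli
      have : (p - (m:ℤ)) • a + (q - (n:ℤ)) • d = (p • a + q • d) - ((m:ℤ) • a + (n:ℤ) • d) := by
        module
      rw [this, he, sub_self]
    have hp : p = (m : ℤ) := by omega
    have hq : q = (n : ℤ) := by omega
    subst hp; subst hq
    refine ⟨by positivity, by positivity, by exact_mod_cast hmn⟩
  · rintro ⟨hp, hq, hpq⟩
    have h := nat_mem (a := a) (d := d) (k := k) p.toNat q.toNat (by
      have : (q.toNat : ℤ) ≤ (p.toNat : ℤ) * k := by
        rw [Int.toNat_of_nonneg hq, Int.toNat_of_nonneg hp]; exact hpq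
      exact_mod_cast this)
    rwa [Int.toNat_of_nonneg hp, Int.toNat_of_nonneg hq] at h
/-- The maximal elements of `Ap(S_{a,d,k}, {a, a+kd})` under `⪯_S` are exactly
`{a+d, …, a+(k−1)d}`; consequently the quasi-Frobenius elements are
`{−(a+d), …, −(a+(k−1)d)}`, and there are `k−1` of them. -/
theorem quasiFrobenius_Sadk (a d : ℤ × ℤ) (k : ℕ) (hk : 2 ≤ k)
    (ha : 0 ≤ a) (hd : 0 ≤ d) (hli : qLinIndep a d) (hmin : minGen a d k) :
    maxElems (Sadk a d k) (aperySet (Sadk a d k) ({a, a + (k : ℤ) • d} : Set (ℤ × ℤ)))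
        = {x : ℤ × ℤ | ∃ i : ℕ, 1 ≤ i ∧ i ≤ k - 1 ∧ x = a + (i : ℤ) • d} ∧
    (fun m => m - a - (a + (k : ℤ) • d)) ''
        maxElems (Sadk a d k) (aperySet (Sadk a d k) ({a, a + (k : ℤ) • d} : Set (ℤ × ℤ)))
        = {x : ℤ × ℤ | ∃ i : ℕ, 1 ≤ i ∧ i ≤ k - 1 ∧ x = -(a + (i : ℤ) • d)} ∧
    ((fun m => m - a - (a + (k : ℤ) • d)) ''
        maxElems (Sadk a d k)
          (aperySet (Sadk a d k) ({a, a + (k : ℤ) • d} : Set (ℤ × ℤ)))).ncard = k - 1 := by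
  have hAp : ∀ x, x ∈ aperySet (Sadk a d k) ({a, a + (k : ℤ) • d} : Set (ℤ × ℤ)) ↔
      (x = 0 ∨ ∃ i : ℕ, 1 ≤ i ∧ i ≤ k - 1 ∧ x = a + (i : ℤ) • d) := by
    intro x
    constructor
    · rintro ⟨hxS, hnot⟩
      obtain ⟨m, n, hmn, rfl⟩ := exists_rep hxS
      have hna := hnot a (Or.inl rfl)
      have hnk := hnot (a + (k : ℤ) • d) (Or.inr rfl)
      have e1 : (m : ℤ) • a + (n : ℤ) • d - a = ((m : ℤ) - 1) • a + (n : ℤ) • d := by module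
      have e2 : (m : ℤ) • a + (n : ℤ) • d - (a + (k : ℤ) • d)
          = ((m : ℤ) - 1) • a + ((n : ℤ) - k) • d := by module
      rw [e1, mem_Sadk hli] at hna
      rw [e2, mem_Sadk hli] at hnk
      push_neg at hna hnk
      rcases Nat.eq_zero_or_pos m with rfl | hm
      · have : n = 0 := by omega
        subst this; left; simp
      · have hm1 : (0 : ℤ) ≤ (m : ℤ) - 1 := by omega
        have c1 : ((m : ℤ) - 1) * k < n := hna hm1 (by positivity)
        have hmk : (n : ℤ) ≤ (m : ℤ) * k := by exact_mod_cast hmn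
        have hnlt : (n : ℤ) < k := by
          by_contra hge
          push_neg at hge
          have c2 := hnk hm1 (by omega)
          have : ((m : ℤ) - 1) * k = (m : ℤ) * k - k := by ring
          linarith
        have hm2 : m = 1 := by
          rcases Nat.lt_or_ge m 2 with h2 | h2
          · omega
          · exfalso
            have hk0 : (0 : ℤ) ≤ (k : ℤ) := by positivity
            have hm2' : (2 : ℤ) ≤ (m : ℤ) := by exact_mod_cast h2
            nlinarith
        subst hm2
        right
        refine ⟨n, ?_, ?_, by push_cast; module⟩
        · have : (0 : ℤ) < (n : ℤ) := by
            have : ((1 : ℕ) : ℤ) - 1 = 0 := by norm_num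
            rw [this, zero_mul] at c1; exact c1
          omega
        · omega
    · rintro (rfl | ⟨i, hi1, hi2, rfl⟩)
      · refine ⟨(Sadk a d k).zero_mem, ?_⟩
        rintro e he
        rcases he with he | he
        · rw [he]
          have e0 : (0 : ℤ × ℤ) - a = (-1 : ℤ) • a + (0 : ℤ) • d := by module
          rw [e0, mem_Sadk hli]
          rintro ⟨h, -, -⟩; omega
        · rw [he]
          have e0 : (0 : ℤ × ℤ) - (a + (k : ℤ) • d) = (-1 : ℤ) • a + (-(k : ℤ)) • d := by
            module
          rw [e0, mem_Sadk hli]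
          rintro ⟨h, -, -⟩; omega
      · refine ⟨?_, ?_⟩
        · have e0 : a + (i : ℤ) • d = (1 : ℤ) • a + (i : ℤ) • d := by module
          rw [e0, mem_Sadk hli]
          refine ⟨by norm_num, by positivity, by omega⟩
        · rintro e he
          rcases he with he | he
          · rw [he]
            have e0 : a + (i : ℤ) • d - a = (0 : ℤ) • a + (i : ℤ) • d := by module
            rw [e0, mem_Sadk hli]
            rintro ⟨-, -, h⟩; omega
          · rw [he]
            have e0 : a + (i : ℤ) • d - (a + (k : ℤ) • d)
                = (0 : ℤ) • a + ((i : ℤ) - k) • d := by module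
            rw [e0, mem_Sadk hli]
            rintro ⟨-, h, -⟩; omega
  have hMax : maxElems (Sadk a d k)
        (aperySet (Sadk a d k) ({a, a + (k : ℤ) • d} : Set (ℤ × ℤ)))
      = {x : ℤ × ℤ | ∃ i : ℕ, 1 ≤ i ∧ i ≤ k - 1 ∧ x = a + (i : ℤ) • d} := by
    ext x
    constructor
    · rintro ⟨hxAp, hmax⟩
      rcases (hAp x).mp hxAp with rfl | hx
      · exfalso
        have h1 : a + ((1 : ℕ) : ℤ) • d ∈
            aperySet (Sadk a d k) ({a, a + (k : ℤ) • d} : Set (ℤ × ℤ)) :=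
          (hAp _).mpr (Or.inr ⟨1, le_refl 1, by omega, rfl⟩)
        have hsub : a + ((1 : ℕ) : ℤ) • d - 0 ∈ Sadk a d k := by
          rw [sub_zero]
          have e0 : a + ((1 : ℕ) : ℤ) • d = (1 : ℤ) • a + (1 : ℤ) • d := by
            push_cast; module
          rw [e0, mem_Sadk hli]
          refine ⟨by norm_num, by norm_num, by omega⟩
        have hzero := hmax _ h1 hsub
        have h00 : (1 : ℤ) • a + (1 : ℤ) • d = 0 := by
          rw [show (1 : ℤ) • a + (1 : ℤ) • d = a + ((1 : ℕ) : ℤ) • d by push_cast; module,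
            hzero]
        have := (indep_int hli 1 1 h00).1
        norm_num at this
      · exact hx
    · rintro ⟨i, h1, h2, rfl⟩
      refine ⟨(hAp _).mpr (Or.inr ⟨i, h1, h2, rfl⟩), ?_⟩
      intro y hy hsub
      rcases (hAp y).mp hy with rfl | ⟨j, hj1, hj2, rfl⟩
      · exfalso
        have e0 : (0 : ℤ × ℤ) - (a + (i : ℤ) • d) = (-1 : ℤ) • a + (-(i : ℤ)) • d := by
          module
        rw [e0, mem_Sadk hli] at hsub
        obtain ⟨h, -, -⟩ := hsub; omega
      · have e0 : (a + (j : ℤ) • d) - (a + (i : ℤ) • d)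
            = (0 : ℤ) • a + ((j : ℤ) - (i : ℤ)) • d := by module
        rw [e0, mem_Sadk hli] at hsub
        obtain ⟨-, hq, hqk⟩ := hsub
        have : j = i := by omega
        rw [this]
  have hImg : (fun m => m - a - (a + (k : ℤ) • d)) ''
        maxElems (Sadk a d k) (aperySet (Sadk a d k) ({a, a + (k : ℤ) • d} : Set (ℤ × ℤ)))
      = {x : ℤ × ℤ | ∃ i : ℕ, 1 ≤ i ∧ i ≤ k - 1 ∧ x = -(a + (i : ℤ) • d)} := by
    rw [hMax]
    ext x
    simp only [Set.mem_image, Set.mem_setOf_eq]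
    constructor
    · rintro ⟨y, ⟨i, hi1, hi2, rfl⟩, rfl⟩
      refine ⟨k - i, by omega, by omega, ?_⟩
      have hc : ((k - i : ℕ) : ℤ) = (k : ℤ) - i := by omega
      rw [hc]; module
    · rintro ⟨i, hi1, hi2, rfl⟩
      refine ⟨a + ((k - i : ℕ) : ℤ) • d, ⟨k - i, by omega, by omega, rfl⟩, ?_⟩
      have hc : ((k - i : ℕ) : ℤ) = (k : ℤ) - i := by omega
      rw [hc]; module
  refine ⟨hMax, hImg, ?_⟩
  rw [hImg]
  have hfin : {x : ℤ × ℤ | ∃ i : ℕ, 1 ≤ i ∧ i ≤ k - 1 ∧ x = -(a + (i : ℤ) • d)}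
      = (fun i : ℕ => -(a + (i : ℤ) • d)) '' ↑(Finset.Icc 1 (k - 1)) := by
    ext x
    simp only [Set.mem_setOf_eq, Set.mem_image, Finset.coe_Icc, Set.mem_Icc]
    constructor
    · rintro ⟨i, h1, h2, rfl⟩; exact ⟨i, ⟨h1, h2⟩, rfl⟩
    · rintro ⟨i, ⟨h1, h2⟩, rfl⟩; exact ⟨i, h1, h2, rfl⟩
  have hinj : Set.InjOn (fun i : ℕ => -(a + (i : ℤ) • d)) ↑(Finset.Icc 1 (k - 1)) := by
    intro i _ j _ h
    simp only at h
    have hd' : a + (i : ℤ) • d = a + (j : ℤ) • d := neg_injective h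
    have h0 : (0 : ℤ) • a + ((i : ℤ) - j) • d = 0 := by
      have hij : (i : ℤ) • d = (j : ℤ) • d := add_left_cancel hd'
      rw [zero_smul, zero_add, sub_smul, hij, sub_self]
    have := (indep_int hli _ _ h0).2
    omega
  rw [hfin, Set.ncard_image_of_injOn hinj, Set.ncard_coe_finset, Nat.card_Icc]
  omega
end

section
/- With notation as above (μ minimal with μb ∈ S_{a,d,k}, and the representation condition on μb), the Apéry set of S_{a,d,k}^b with respect to E = {a, a+kd} is {0} ∪ {ℓb : 1 ≤ ℓ ≤ μ−1} ∪ {(a+id) + ℓb : 1 ≤ i ≤ k−1, 0 ≤ ℓ ≤ μ−1}; consequently QF(S_{a,d,k}^b) = {(μ−1)b − (a+id) : 1 ≤ i ≤ k−1}. -/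
/-- The extension `S_{a,d,k}^b = ⟨a, a+d, …, a+kd, b⟩`. -/
def Sadkb (a d b : ℤ × ℤ) (k : ℕ) : AddSubmonoid (ℤ × ℤ) :=
  AddSubmonoid.closure (gensSet a d k ∪ {b})

section helpers

private def coneSb (a d b : ℤ × ℤ) (k : ℕ) : AddSubmonoid (ℤ × ℤ) where
  carrier := {x | ∃ n m ℓ : ℕ, m ≤ k * n ∧ x = (n : ℤ) • a + (m : ℤ) • d + (ℓ : ℤ) • b}
  zero_mem' := ⟨0, 0, 0, le_refl _, by simp⟩
  add_mem' := by
    rintro x y ⟨n, m, l, h, rfl⟩ ⟨n', m', l', h', rfl⟩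
    refine ⟨n + n', m + m', l + l', ?_, by push_cast; module⟩
    calc m + m' ≤ k * n + k * n' := Nat.add_le_add h h'
      _ = k * (n + n') := (Nat.mul_add k n n').symm

private lemma cone_mem (a d : ℤ × ℤ) (k : ℕ) : ∀ n m : ℕ, m ≤ k * n →
    (n : ℤ) • a + (m : ℤ) • d ∈ Sadk a d k := by
  intro n
  induction n with
  | zero => intro m hm; simp at hm; subst hm; simp [AddSubmonoid.zero_mem]
  | succ n ih =>
    intro m hm
    have h1 : min m k ≤ k := Nat.min_le_right _ _
    have hkn : k * (n+1) = k * n + k := by ring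
    have h2 : m - min m k ≤ k * n := by omega
    have hx : ((n+1 : ℕ) : ℤ) • a + (m : ℤ) • d =
        (a + ((min m k : ℕ) : ℤ) • d) + ((n : ℤ) • a + ((m - min m k : ℕ) : ℤ) • d) := by
      have : (((m - min m k : ℕ)) : ℤ) = (m : ℤ) - (min m k : ℕ) := by
        push_cast [Nat.cast_sub (Nat.min_le_left m k)]; ring
      rw [this]; push_cast; module
    rw [hx]
    exact AddSubmonoid.add_mem _ (AddSubmonoid.subset_closure ⟨min m k, h1, rfl⟩)
      (ih (m - min m k) h2)

private lemma mem_Sadk_iff (a d : ℤ × ℤ) (k : ℕ) (x : ℤ × ℤ) :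
    x ∈ Sadk a d k ↔ ∃ n m : ℕ, m ≤ k * n ∧ x = (n : ℤ) • a + (m : ℤ) • d := by
  constructor
  · intro hx
    have hle : Sadk a d k ≤ {
        carrier := {x | ∃ n m : ℕ, m ≤ k * n ∧ x = (n : ℤ) • a + (m : ℤ) • d}
        zero_mem' := ⟨0, 0, le_refl _, by simp⟩
        add_mem' := by
          rintro x y ⟨n, m, h, rfl⟩ ⟨n', m', h', rfl⟩
          refine ⟨n + n', m + m', ?_, by push_cast; module⟩
          calc m + m' ≤ k * n + k * n' := Nat.add_le_add h h'
            _ = k * (n + n') := (Nat.mul_add k n n').symm } := by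
      rw [Sadk, AddSubmonoid.closure_le]
      rintro y ⟨i, hi, rfl⟩
      exact ⟨1, i, by omega, by push_cast; module⟩
    exact hle hx
  · rintro ⟨n, m, hm, rfl⟩; exact cone_mem a d k n m hm

private lemma mem_Sadkb_iff (a d b : ℤ × ℤ) (k : ℕ) (x : ℤ × ℤ) :
    x ∈ Sadkb a d b k ↔ ∃ n m ℓ : ℕ, m ≤ k * n ∧
      x = (n : ℤ) • a + (m : ℤ) • d + (ℓ : ℤ) • b := by
  constructor
  · intro hx
    have hle : Sadkb a d b k ≤ coneSb a d b k := by
      rw [Sadkb, AddSubmonoid.closure_le]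
      rintro y (⟨i, hi, rfl⟩ | hy)
      · exact ⟨1, i, 0, by omega, by push_cast; module⟩
      · rcases hy with rfl
        exact ⟨0, 0, 1, le_refl _, by push_cast; module⟩
    exact hle hx
  · rintro ⟨n, m, l, hm, rfl⟩
    have h1 : (n : ℤ) • a + (m : ℤ) • d ∈ Sadkb a d b k := by
      have h := cone_mem a d k n m hm
      have hle : Sadk a d k ≤ Sadkb a d b k :=
        AddSubmonoid.closure_mono (Set.subset_union_left)
      exact hle h
    have h2 : (l : ℤ) • b ∈ Sadkb a d b k := by
      have hb : b ∈ Sadkb a d b k :=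
        AddSubmonoid.subset_closure (Set.mem_union_right _ rfl)
      simpa using (Sadkb a d b k).nsmul_mem hb l
    exact AddSubmonoid.add_mem _ h1 h2

private lemma indep_det {a d : ℤ × ℤ} (h : qLinIndep a d) : a.1 * d.2 - a.2 * d.1 ≠ 0 := by
  rw [qLinIndep, LinearIndependent.pair_iff] at h
  intro hdet
  have hq : (a.1 : ℚ) * d.2 - (a.2 : ℚ) * d.1 = 0 := by exact_mod_cast hdet
  have h1 := h (d.2 : ℚ) (-(a.2 : ℚ)) (by
    simp only [Prod.ext_iff, Prod.smul_fst, Prod.smul_snd, Prod.fst_add, Prod.snd_add,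
      smul_eq_mul, Prod.fst_zero, Prod.snd_zero]
    first | constructor <;> first | linear_combination hq | linear_combination -hq | ring)
  have h2 := h (d.1 : ℚ) (-(a.1 : ℚ)) (by
    simp only [Prod.ext_iff, Prod.smul_fst, Prod.smul_snd, Prod.fst_add, Prod.snd_add,
      smul_eq_mul, Prod.fst_zero, Prod.snd_zero]
    first | constructor <;> first | linear_combination hq | linear_combination -hq | ring)
  have ha1 : (a.1 : ℚ) = 0 := by
    have := h1.2; have := h2.2; push_cast at *; linarith [neg_eq_zero.mp h2.2]
  have ha2 : (a.2 : ℚ) = 0 := by linarith [neg_eq_zero.mp h1.2]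
  have h3 := h 1 0 (by
    simp only [Prod.ext_iff, Prod.smul_fst, Prod.smul_snd, Prod.fst_add, Prod.snd_add,
      smul_eq_mul, Prod.fst_zero, Prod.snd_zero]
    constructor <;> nlinarith)
  exact one_ne_zero h3.1

private lemma indep_zero {a d : ℤ × ℤ} (hdet : a.1 * d.2 - a.2 * d.1 ≠ 0) (P Q : ℤ)
    (h1 : P * a.1 + Q * d.1 = 0) (h2 : P * a.2 + Q * d.2 = 0) : P = 0 ∧ Q = 0 := by
  constructor
  · have h : P * (a.1 * d.2 - a.2 * d.1) = 0 := by linear_combination d.2 * h1 - d.1 * h2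
    exact (mul_eq_zero.mp h).resolve_right hdet
  · have h : Q * (a.1 * d.2 - a.2 * d.1) = 0 := by linear_combination a.1 * h2 - a.2 * h1
    exact (mul_eq_zero.mp h).resolve_right hdet

private lemma extractE {a d b : ℤ × ℤ} (hdet : a.1 * d.2 - a.2 * d.1 ≠ 0) {μ N M : ℕ}
    (hmub : (μ : ℤ) • b = (N : ℤ) • a + (M : ℤ) • d) {P Q R : ℤ}
    (heq : P • a + Q • d + R • b = 0) :
    P * μ + R * N = 0 ∧ Q * μ + R * M = 0 := by
  have h1 := congrArg Prod.fst heq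
  have h2 := congrArg Prod.snd heq
  have hb1 := congrArg Prod.fst hmub
  have hb2 := congrArg Prod.snd hmub
  simp only [Prod.fst_add, Prod.snd_add, Prod.smul_fst, Prod.smul_snd, smul_eq_mul,
    Prod.fst_zero, Prod.snd_zero] at h1 h2 hb1 hb2
  refine indep_zero hdet _ _ ?_ ?_
  · linear_combination (μ : ℤ) * h1 - R * hb1
  · linear_combination (μ : ℤ) * h2 - R * hb2

private lemma case_nonpos {μ N : ℕ} (hμpos : 0 < μ) (hN : 1 ≤ N) (n₀ n : ℕ) (hn₀ : n₀ ≤ 1)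
    (ν : ℤ) (hν : ν ≤ 0)
    (E1 : ((n₀ : ℤ) - 1 - n) * μ + ν * N = 0) : n₀ = 1 ∧ n = 0 ∧ ν = 0 := by
  have hP : ((n₀ : ℤ) - 1 - n) * μ = (-ν) * N := by linear_combination E1
  have hP0 : ((n₀ : ℤ) - 1 - n) * μ ≥ 0 := by
    rw [hP]; exact mul_nonneg (by omega) (Int.natCast_nonneg N)
  have hPle : ((n₀ : ℤ) - 1 - n) ≤ 0 := by
    have h1 : (0:ℤ) ≤ n := Int.natCast_nonneg n
    have h2 : (n₀:ℤ) ≤ 1 := by exact_mod_cast hn₀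
    omega
  have hPz : ((n₀ : ℤ) - 1 - n) = 0 := by
    rcases lt_or_eq_of_le hPle with h | h
    · exfalso
      have := mul_neg_of_neg_of_pos h (by exact_mod_cast hμpos : (0:ℤ) < μ)
      omega
    · exact h
  have hn01 : n₀ = 1 ∧ n = 0 := by constructor <;> omega
  have hν0 : ν = 0 := by
    rw [hPz, zero_mul] at hP
    rcases mul_eq_zero.mp hP.symm with h | h
    · omega
    · exfalso
      have : (1:ℤ) ≤ N := by exact_mod_cast hN
      omega
  exact ⟨hn01.1, hn01.2, hν0⟩

private lemma case_pos {μ N M : ℕ} (hμpos : 0 < μ) (hN : 1 ≤ N)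
    (nosmallZ : ∀ ν n m : ℤ, 0 < ν → 0 ≤ n → 0 ≤ m →
      ν * N = n * μ → ν * M = m * μ → (μ : ℤ) ≤ ν) (P Q ν : ℤ) (hν : 0 < ν)
    (hνμ : ν ≤ (μ : ℤ) - 1)
    (E1 : P * μ + ν * N = 0) (E2 : Q * μ + ν * M = 0) : False := by
  have hμZ : (0:ℤ) < μ := by exact_mod_cast hμpos
  have hNZ : (1:ℤ) ≤ N := by exact_mod_cast hN
  have hMZ : (0:ℤ) ≤ M := Int.natCast_nonneg M
  have hPn : 0 ≤ (N : ℤ) + P := by nlinarith [E1]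
  have hQM : 0 ≤ (M : ℤ) + Q := by nlinarith [E2]
  have hge : (μ:ℤ) ≤ μ - ν := by
    refine nosmallZ ((μ:ℤ) - ν) ((N:ℤ) + P) ((M:ℤ) + Q) (by omega) hPn hQM ?_ ?_
    · linear_combination -E1
    · linear_combination -E2
  omega

private lemma notMem_shift {a d b : ℤ × ℤ} {k μ N M : ℕ}
    (hdet : a.1 * d.2 - a.2 * d.1 ≠ 0) (hμpos : 0 < μ) (hN : 1 ≤ N) (hk : 2 ≤ k)
    (hmub : (μ : ℤ) • b = (N : ℤ) • a + (M : ℤ) • d)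
    (nosmallZ : ∀ ν n m : ℤ, 0 < ν → 0 ≤ n → 0 ≤ m →
      ν * N = n * μ → ν * M = m * μ → (μ : ℤ) ≤ ν)
    (n₀ m₀ ℓ j : ℕ) (hn₀ : n₀ ≤ 1)
    (hm₀1 : n₀ = 1 → 1 ≤ m₀ ∧ m₀ ≤ k - 1) (hj : j = 0 ∨ j = k) (hℓ : ℓ < μ) :
    (n₀ : ℤ) • a + (m₀ : ℤ) • d + (ℓ : ℤ) • b - (a + (j : ℤ) • d) ∉ Sadkb a d b k := by
  intro hmem
  rw [mem_Sadkb_iff] at hmem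
  obtain ⟨n, m, ℓ', hmn, hv⟩ := hmem
  have heq : ((n₀ : ℤ) - 1 - n) • a + ((m₀ : ℤ) - j - m) • d + ((ℓ : ℤ) - ℓ') • b = 0 := by
    linear_combination (norm := module) hv
  obtain ⟨E1, E2⟩ := extractE hdet hmub heq
  rcases le_or_gt ((ℓ : ℤ) - ℓ') 0 with hν | hν
  · obtain ⟨h1, h2, h3⟩ := case_nonpos hμpos hN n₀ n hn₀ _ hν E1
    rw [h3, zero_mul, add_zero] at E2
    have hQ : ((m₀ : ℤ) - j - m) = 0 := by
      rcases mul_eq_zero.mp E2 with h | h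
      · exact h
      · exfalso
        have : (0:ℤ) < μ := by exact_mod_cast hμpos
        omega
    have hm0 : m = 0 := by
      rw [h2, Nat.mul_zero] at hmn; omega
    obtain ⟨hm₁, hm₂⟩ := hm₀1 h1
    omega
  · exact case_pos hμpos hN nosmallZ ((n₀:ℤ) - 1 - n) ((m₀:ℤ) - j - m) ((ℓ:ℤ) - ℓ') hν
      (by omega) E1 E2

private lemma nosmallZ_of {a d b : ℤ × ℤ} {k μ N M : ℕ} (hμpos : 0 < μ) (hMN : M ≤ k * N)
    (hmub : (μ : ℤ) • b = (N : ℤ) • a + (M : ℤ) • d)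
    (hμmin : ∀ ν : ℕ, 0 < ν → (ν : ℤ) • b ∈ Sadk a d k → μ ≤ ν) :
    ∀ ν n m : ℤ, 0 < ν → 0 ≤ n → 0 ≤ m →
      ν * N = n * μ → ν * M = m * μ → (μ : ℤ) ≤ ν := by
  intro ν n m hν hn hm e1 e2
  have hb1 := congrArg Prod.fst hmub
  have hb2 := congrArg Prod.snd hmub
  simp only [Prod.fst_add, Prod.snd_add, Prod.smul_fst, Prod.smul_snd, smul_eq_mul] at hb1 hb2
  have hμZ : ((μ:ℤ)) ≠ 0 := by positivity
  have c1 : ν * b.1 = n * a.1 + m * d.1 := by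
    have h : (μ:ℤ) * (ν * b.1) = (μ:ℤ) * (n * a.1 + m * d.1) := by
      linear_combination ν * hb1 + a.1 * e1 + d.1 * e2
    exact mul_left_cancel₀ hμZ h
  have c2 : ν * b.2 = n * a.2 + m * d.2 := by
    have h : (μ:ℤ) * (ν * b.2) = (μ:ℤ) * (n * a.2 + m * d.2) := by
      linear_combination ν * hb2 + a.2 * e1 + d.2 * e2
    exact mul_left_cancel₀ hμZ h
  have hmkn : m ≤ (k : ℤ) * n := by
    have h : m * μ ≤ ((k:ℤ) * n) * μ := by
      have hMkN : (M:ℤ) ≤ (k:ℤ) * N := by exact_mod_cast hMN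
      calc (m:ℤ) * μ = ν * M := e2.symm
        _ ≤ ν * ((k:ℤ) * N) := mul_le_mul_of_nonneg_left hMkN hν.le
        _ = (k:ℤ) * (ν * N) := by ring
        _ = (k:ℤ) * (n * μ) := by rw [e1]
        _ = ((k:ℤ) * n) * μ := by ring
    exact le_of_mul_le_mul_right h (by exact_mod_cast hμpos)
  have hmem : ((ν.toNat : ℕ) : ℤ) • b ∈ Sadk a d k := by
    rw [mem_Sadk_iff]
    refine ⟨n.toNat, m.toNat, ?_, ?_⟩
    · have h : (m.toNat : ℤ) ≤ (k : ℤ) * n.toNat := by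
        rw [Int.toNat_of_nonneg hm, Int.toNat_of_nonneg hn]; exact hmkn
      exact_mod_cast h
    · have h1 : (ν.toNat : ℤ) = ν := by omega
      have h2 : (n.toNat : ℤ) = n := by omega
      have h3 : (m.toNat : ℤ) = m := by omega
      rw [h1, h2, h3]
      apply Prod.ext
      · simpa [smul_eq_mul] using c1
      · simpa [smul_eq_mul] using c2
  have := hμmin ν.toNat (by omega) hmem
  omega

private lemma reduce_rep {a d b : ℤ × ℤ} {k μ N M : ℕ} (hμpos : 0 < μ) (hMN : M ≤ k * N)
    (hmub : (μ : ℤ) • b = (N : ℤ) • a + (M : ℤ) • d) :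
    ∀ x ∈ Sadkb a d b k, ∃ n m ℓ : ℕ, m ≤ k * n ∧ ℓ < μ ∧
      x = (n : ℤ) • a + (m : ℤ) • d + (ℓ : ℤ) • b := by
  intro x hx
  rw [mem_Sadkb_iff] at hx
  obtain ⟨n, m, ℓ, hmn, hv⟩ := hx
  induction ℓ using Nat.strong_induction_on generalizing n m with
  | _ ℓ ih =>
    by_cases hℓ : ℓ < μ
    · exact ⟨n, m, ℓ, hmn, hℓ, hv⟩
    · refine ih (ℓ - μ) (by omega) (n + N) (m + M) ?_ ?_
      · calc m + M ≤ k * n + k * N := Nat.add_le_add hmn hMN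
          _ = k * (n + N) := (Nat.mul_add k n N).symm
      · rw [hv]
        have hc : ((ℓ - μ : ℕ) : ℤ) = (ℓ : ℤ) - μ := by omega
        rw [hc]
        push_cast
        linear_combination (norm := module) hmub

end helpers

/-- The Apéry set of `S_{a,d,k}^b` with respect to `E = {a, a+kd}` is
`{0} ∪ {ℓb : 1 ≤ ℓ ≤ μ−1} ∪ {(a+id) + ℓb : 1 ≤ i ≤ k−1, 0 ≤ ℓ ≤ μ−1}`; consequently the
quasi-Frobenius elements of `S_{a,d,k}^b` are `{(μ−1)b − (a+id) : 1 ≤ i ≤ k−1}`. -/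
theorem aperySet_Sadkb (a d b : ℤ × ℤ) (k : ℕ) (hk : 2 ≤ k)
    (ha : 0 ≤ a) (hd : 0 ≤ d) (hbpos : 0 ≤ b)
    (hli : qLinIndep a d) (hmin : minGen a d k)
    (hb : b ∉ Sadk a d k) (μ : ℕ) (hμpos : 0 < μ) (hμb : (μ : ℤ) • b ∈ Sadk a d k)
    (hμmin : ∀ ν : ℕ, 0 < ν → (ν : ℤ) • b ∈ Sadk a d k → μ ≤ ν)
    (lam : Fin (k + 1) → ℕ)
    (hrep : (μ : ℤ) • b = ∑ i : Fin (k + 1), (lam i : ℤ) • (a + ((i : ℕ) : ℤ) • d))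
    (hlam : lam 0 ≠ 0 ∨ lam (Fin.last k) ≠ 0) :
    aperySet (Sadkb a d b k) ({a, a + (k : ℤ) • d} : Set (ℤ × ℤ)) =
      ({0} ∪ {x : ℤ × ℤ | ∃ ℓ : ℕ, 1 ≤ ℓ ∧ ℓ ≤ μ - 1 ∧ x = (ℓ : ℤ) • b} ∪
        {x : ℤ × ℤ | ∃ i ℓ : ℕ, 1 ≤ i ∧ i ≤ k - 1 ∧ ℓ ≤ μ - 1 ∧
          x = a + (i : ℤ) • d + (ℓ : ℤ) • b}) ∧
    (fun m => m - a - (a + (k : ℤ) • d)) ''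
        maxElems (Sadkb a d b k)
          (aperySet (Sadkb a d b k) ({a, a + (k : ℤ) • d} : Set (ℤ × ℤ)))
      = {x : ℤ × ℤ | ∃ i : ℕ, 1 ≤ i ∧ i ≤ k - 1 ∧
          x = ((μ : ℤ) - 1) • b - (a + (i : ℤ) • d)} := by
  have hdet := indep_det hli
  obtain ⟨N, M, hMN, hmub⟩ := (mem_Sadk_iff a d k _).mp hμb
  have hN : 1 ≤ N := by
    by_contra hcon
    have hN0 : N = 0 := by omega
    have hM0 : M = 0 := by rw [hN0, Nat.mul_zero] at hMN; omega
    rw [hN0, hM0] at hmub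
    simp only [Nat.cast_zero, zero_smul, add_zero] at hmub
    have hb0 : b = 0 := by
      rcases smul_eq_zero.mp hmub with h | h
      · exfalso
        have hne : (μ:ℤ) ≠ 0 := by positivity
        exact hne h
      · exact h
    exact hb (hb0 ▸ (Sadk a d k).zero_mem)
  have nosmall := nosmallZ_of hμpos hMN hmub hμmin
  have hAp : aperySet (Sadkb a d b k) ({a, a + (k : ℤ) • d} : Set (ℤ × ℤ)) =
      ({0} ∪ {x : ℤ × ℤ | ∃ ℓ : ℕ, 1 ≤ ℓ ∧ ℓ ≤ μ - 1 ∧ x = (ℓ : ℤ) • b} ∪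
        {x : ℤ × ℤ | ∃ i ℓ : ℕ, 1 ≤ i ∧ i ≤ k - 1 ∧ ℓ ≤ μ - 1 ∧
          x = a + (i : ℤ) • d + (ℓ : ℤ) • b}) := by
    ext x
    constructor
    · rintro ⟨hxS, hxE⟩
      obtain ⟨n, m, ℓ, hmn, hℓ, hv⟩ := reduce_rep hμpos hMN hmub x hxS
      have hxa := hxE a (Set.mem_insert _ _)
      have hxkd := hxE (a + (k:ℤ) • d) (Set.mem_insert_of_mem _ rfl)
      rcases Nat.eq_zero_or_pos n with hn0 | hn1
      · subst hn0
        rw [Nat.mul_zero] at hmn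
        have hm0 : m = 0 := by omega
        subst hm0
        rcases Nat.eq_zero_or_pos ℓ with hl0 | hl1
        · subst hl0
          left; left
          simp only [Set.mem_singleton_iff, hv]
          push_cast; module
        · left; right
          exact ⟨ℓ, hl1, by omega, by rw [hv]; push_cast; module⟩
      · obtain ⟨n', rfl⟩ : ∃ n', n = n' + 1 := ⟨n - 1, by omega⟩
        have hm_big : ¬ (m ≤ k * n') := by
          intro hle
          apply hxa
          rw [mem_Sadkb_iff]
          exact ⟨n', m, ℓ, hle, by rw [hv]; push_cast; module⟩
        have hm_small : m < k := by
          by_contra hge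
          push_neg at hge
          apply hxkd
          rw [mem_Sadkb_iff]
          have hkn : k * (n' + 1) = k * n' + k := by ring
          refine ⟨n', m - k, ℓ, by omega, ?_⟩
          rw [hv]
          have hc : ((m - k : ℕ) : ℤ) = (m:ℤ) - k := by omega
          rw [hc]; push_cast; module
        have hn'0 : n' = 0 := by
          by_contra hne
          have h1 : k * 1 ≤ k * n' := Nat.mul_le_mul_left k (by omega)
          rw [Nat.mul_one] at h1
          omega
        subst hn'0
        rw [Nat.mul_zero] at hm_big
        right
        exact ⟨m, ℓ, by omega, by omega, by omega, by rw [hv]; push_cast; module⟩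
    · intro hx
      have hxS : x ∈ Sadkb a d b k := by
        rw [mem_Sadkb_iff]
        rcases hx with (rfl | ⟨ℓ, h1, h2, rfl⟩) | ⟨i, ℓ, h1, h2, h3, rfl⟩
        · exact ⟨0, 0, 0, le_refl _, by push_cast; module⟩
        · exact ⟨0, 0, ℓ, le_refl _, by push_cast; module⟩
        · exact ⟨1, i, ℓ, by rw [Nat.mul_one]; omega, by push_cast; module⟩
      refine ⟨hxS, ?_⟩
      intro e he
      simp only [Set.mem_insert_iff, Set.mem_singleton_iff] at he
      rcases hx with (rfl | ⟨ℓ, h1, h2, rfl⟩) | ⟨i, ℓ, h1, h2, h3, rfl⟩ <;>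
        rcases he with he | he <;> rw [he]
      · have hsh : ((0:ℕ) : ℤ) • a + ((0:ℕ) : ℤ) • d + ((0:ℕ) : ℤ) • b
            - (a + ((0:ℕ) : ℤ) • d) = 0 - a := by push_cast; module
        rw [← hsh]
        exact notMem_shift hdet hμpos hN hk hmub nosmall 0 0 0 0 (by omega)
          (fun h => absurd h (by omega)) (Or.inl rfl) hμpos
      · have hsh : ((0:ℕ) : ℤ) • a + ((0:ℕ) : ℤ) • d + ((0:ℕ) : ℤ) • b
            - (a + ((k:ℕ) : ℤ) • d) = 0 - (a + (k:ℤ) • d) := by push_cast; module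
        rw [← hsh]
        exact notMem_shift hdet hμpos hN hk hmub nosmall 0 0 0 k (by omega)
          (fun h => absurd h (by omega)) (Or.inr rfl) hμpos
      · have hsh : ((0:ℕ) : ℤ) • a + ((0:ℕ) : ℤ) • d + ((ℓ:ℕ) : ℤ) • b
            - (a + ((0:ℕ) : ℤ) • d) = (ℓ:ℤ) • b - a := by push_cast; module
        rw [← hsh]
        exact notMem_shift hdet hμpos hN hk hmub nosmall 0 0 ℓ 0 (by omega)
          (fun h => absurd h (by omega)) (Or.inl rfl) (by omega)
      · have hsh : ((0:ℕ) : ℤ) • a + ((0:ℕ) : ℤ) • d + ((ℓ:ℕ) : ℤ) • b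
            - (a + ((k:ℕ) : ℤ) • d) = (ℓ:ℤ) • b - (a + (k:ℤ) • d) := by push_cast; module
        rw [← hsh]
        exact notMem_shift hdet hμpos hN hk hmub nosmall 0 0 ℓ k (by omega)
          (fun h => absurd h (by omega)) (Or.inr rfl) (by omega)
      · have hsh : ((1:ℕ) : ℤ) • a + ((i:ℕ) : ℤ) • d + ((ℓ:ℕ) : ℤ) • b
            - (a + ((0:ℕ) : ℤ) • d) = a + (i:ℤ) • d + (ℓ:ℤ) • b - a := by push_cast; module
        rw [← hsh]
        exact notMem_shift hdet hμpos hN hk hmub nosmall 1 i ℓ 0 (by omega)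
          (fun _ => ⟨h1, h2⟩) (Or.inl rfl) (by omega)
      · have hsh : ((1:ℕ) : ℤ) • a + ((i:ℕ) : ℤ) • d + ((ℓ:ℕ) : ℤ) • b
            - (a + ((k:ℕ) : ℤ) • d) = a + (i:ℤ) • d + (ℓ:ℤ) • b - (a + (k:ℤ) • d) := by
          push_cast; module
        rw [← hsh]
        exact notMem_shift hdet hμpos hN hk hmub nosmall 1 i ℓ k (by omega)
          (fun _ => ⟨h1, h2⟩) (Or.inr rfl) (by omega)
  refine ⟨hAp, ?_⟩
  have hμZ : (0:ℤ) < (μ:ℤ) := by exact_mod_cast hμpos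
  have hNZ : (1:ℤ) ≤ (N:ℤ) := by exact_mod_cast hN
  have hmax : maxElems (Sadkb a d b k)
      (aperySet (Sadkb a d b k) ({a, a + (k : ℤ) • d} : Set (ℤ × ℤ)))
      = {x : ℤ × ℤ | ∃ i : ℕ, 1 ≤ i ∧ i ≤ k - 1 ∧
          x = a + (i:ℤ) • d + ((μ - 1 : ℕ) : ℤ) • b} := by
    rw [hAp]
    ext x
    constructor
    · rintro ⟨hxA, hmaxx⟩
      rcases hxA with (rfl | ⟨ℓ, h1, h2, rfl⟩) | ⟨i, ℓ, h1, h2, h3, rfl⟩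
      · exfalso
        have hyA : a + ((1:ℕ):ℤ) • d + ((μ - 1 : ℕ):ℤ) • b ∈
            ({0} ∪ {x : ℤ × ℤ | ∃ ℓ : ℕ, 1 ≤ ℓ ∧ ℓ ≤ μ - 1 ∧ x = (ℓ : ℤ) • b} ∪
              {x : ℤ × ℤ | ∃ i ℓ : ℕ, 1 ≤ i ∧ i ≤ k - 1 ∧ ℓ ≤ μ - 1 ∧
                x = a + (i : ℤ) • d + (ℓ : ℤ) • b}) :=
          Or.inr ⟨1, μ - 1, le_refl _, by omega, le_refl _, rfl⟩
        have hyS : a + ((1:ℕ):ℤ) • d + ((μ - 1 : ℕ):ℤ) • b - 0 ∈ Sadkb a d b k := by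
          rw [mem_Sadkb_iff]
          exact ⟨1, 1, μ - 1, by rw [Nat.mul_one]; omega, by push_cast; module⟩
        have hy0 := hmaxx _ hyA hyS
        have heq : (1:ℤ) • a + (1:ℤ) • d + ((μ - 1 : ℕ):ℤ) • b = 0 := by
          linear_combination (norm := module) hy0
        obtain ⟨E1, E2⟩ := extractE hdet hmub heq
        have hp : (0:ℤ) ≤ ((μ - 1 : ℕ):ℤ) * (N:ℤ) := by positivity
        linarith [E1, hp, hμZ]
      · exfalso
        have hyA : a + ((1:ℕ):ℤ) • d + ((μ - 1 : ℕ):ℤ) • b ∈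
            ({0} ∪ {x : ℤ × ℤ | ∃ ℓ : ℕ, 1 ≤ ℓ ∧ ℓ ≤ μ - 1 ∧ x = (ℓ : ℤ) • b} ∪
              {x : ℤ × ℤ | ∃ i ℓ : ℕ, 1 ≤ i ∧ i ≤ k - 1 ∧ ℓ ≤ μ - 1 ∧
                x = a + (i : ℤ) • d + (ℓ : ℤ) • b}) :=
          Or.inr ⟨1, μ - 1, le_refl _, by omega, le_refl _, rfl⟩
        have hyS : a + ((1:ℕ):ℤ) • d + ((μ - 1 : ℕ):ℤ) • b - (ℓ:ℤ) • b ∈ Sadkb a d b k := by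
          rw [mem_Sadkb_iff]
          refine ⟨1, 1, μ - 1 - ℓ, by rw [Nat.mul_one]; omega, ?_⟩
          have hc : ((μ - 1 - ℓ : ℕ) : ℤ) = ((μ - 1 : ℕ):ℤ) - (ℓ:ℤ) := by omega
          rw [hc]; push_cast; module
        have hy0 := hmaxx _ hyA hyS
        have heq : (1:ℤ) • a + (1:ℤ) • d + (((μ - 1 : ℕ):ℤ) - (ℓ:ℤ)) • b = 0 := by
          linear_combination (norm := module) hy0
        obtain ⟨E1, E2⟩ := extractE hdet hmub heq
        have hc : (0:ℤ) ≤ ((μ - 1 : ℕ):ℤ) - (ℓ:ℤ) := by omega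
        have hp : (0:ℤ) ≤ (((μ - 1 : ℕ):ℤ) - (ℓ:ℤ)) * (N:ℤ) :=
          mul_nonneg hc (Int.natCast_nonneg N)
        linarith [E1, hp, hμZ]
      · by_cases hℓeq : ℓ = μ - 1
        · exact ⟨i, h1, h2, by rw [hℓeq]⟩
        · exfalso
          have hyA : a + ((i:ℕ):ℤ) • d + ((μ - 1 : ℕ):ℤ) • b ∈
              ({0} ∪ {x : ℤ × ℤ | ∃ ℓ : ℕ, 1 ≤ ℓ ∧ ℓ ≤ μ - 1 ∧ x = (ℓ : ℤ) • b} ∪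
                {x : ℤ × ℤ | ∃ i ℓ : ℕ, 1 ≤ i ∧ i ≤ k - 1 ∧ ℓ ≤ μ - 1 ∧
                  x = a + (i : ℤ) • d + (ℓ : ℤ) • b}) :=
            Or.inr ⟨i, μ - 1, h1, h2, le_refl _, rfl⟩
          have hyS : a + ((i:ℕ):ℤ) • d + ((μ - 1 : ℕ):ℤ) • b
              - (a + (i:ℤ) • d + (ℓ:ℤ) • b) ∈ Sadkb a d b k := by
            rw [mem_Sadkb_iff]
            refine ⟨0, 0, μ - 1 - ℓ, le_refl _, ?_⟩
            have hc : ((μ - 1 - ℓ : ℕ) : ℤ) = ((μ - 1 : ℕ):ℤ) - (ℓ:ℤ) := by omega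
            rw [hc]; push_cast; module
          have hy0 := hmaxx _ hyA hyS
          have heq : (0:ℤ) • a + (0:ℤ) • d + (((μ - 1 : ℕ):ℤ) - (ℓ:ℤ)) • b = 0 := by
            linear_combination (norm := module) hy0
          obtain ⟨E1, E2⟩ := extractE hdet hmub heq
          have E1' : (((μ - 1 : ℕ):ℤ) - (ℓ:ℤ)) * (N:ℤ) = 0 := by linear_combination E1
          rcases mul_eq_zero.mp E1' with h | h
          · omega
          · omega
    · rintro ⟨i, h1, h2, rfl⟩
      refine ⟨Or.inr ⟨i, μ - 1, h1, h2, le_refl _, rfl⟩, ?_⟩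
      rintro y ((rfl | ⟨ℓ₀, g1, g2, rfl⟩) | ⟨i₀, ℓ₀, g1, g2, g3, rfl⟩) hyx <;>
        rw [mem_Sadkb_iff] at hyx
      · exfalso
        obtain ⟨n, m, ℓ', hmn, hv⟩ := hyx
        have heq : (((0:ℕ):ℤ) - 1 - (n:ℤ)) • a + ((0:ℤ) - (i:ℤ) - (m:ℤ)) • d +
            ((0:ℤ) - ((μ - 1 : ℕ):ℤ) - (ℓ':ℤ)) • b = 0 := by
          linear_combination (norm := module) hv
        obtain ⟨E1, E2⟩ := extractE hdet hmub heq
        obtain ⟨hh, -, -⟩ := case_nonpos hμpos hN 0 n (by omega) _ (by omega) E1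
        omega
      · exfalso
        obtain ⟨n, m, ℓ', hmn, hv⟩ := hyx
        have heq : (((0:ℕ):ℤ) - 1 - (n:ℤ)) • a + ((0:ℤ) - (i:ℤ) - (m:ℤ)) • d +
            (((ℓ₀:ℤ) - ((μ - 1 : ℕ):ℤ)) - (ℓ':ℤ)) • b = 0 := by
          linear_combination (norm := module) hv
        obtain ⟨E1, E2⟩ := extractE hdet hmub heq
        obtain ⟨hh, -, -⟩ := case_nonpos hμpos hN 0 n (by omega) _ (by omega) E1
        omega
      · obtain ⟨n, m, ℓ', hmn, hv⟩ := hyx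
        have heq : (((1:ℕ):ℤ) - 1 - (n:ℤ)) • a + (((i₀:ℤ) - (i:ℤ)) - (m:ℤ)) • d +
            (((ℓ₀:ℤ) - ((μ - 1 : ℕ):ℤ)) - (ℓ':ℤ)) • b = 0 := by
          linear_combination (norm := module) hv
        obtain ⟨E1, E2⟩ := extractE hdet hmub heq
        obtain ⟨-, hn, hν0⟩ := case_nonpos hμpos hN 1 n (by omega) _ (by omega) E1
        have E2' : (((i₀:ℤ) - (i:ℤ)) - (m:ℤ)) * (μ:ℤ) = 0 := by
          linear_combination E2 - (M:ℤ) * hν0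
        have hQ : ((i₀:ℤ) - (i:ℤ)) - (m:ℤ) = 0 := by
          rcases mul_eq_zero.mp E2' with h | h
          · exact h
          · exfalso; omega
        have hm0 : m = 0 := by rw [hn, Nat.mul_zero] at hmn; omega
        have hi : i₀ = i := by omega
        have hl : ℓ₀ = μ - 1 := by omega
        rw [hi, hl]
  rw [hmax]
  ext z
  simp only [Set.mem_image, Set.mem_setOf_eq]
  constructor
  · rintro ⟨x, ⟨i, h1, h2, rfl⟩, rfl⟩
    refine ⟨k - i, by omega, by omega, ?_⟩
    have c1 : ((k - i : ℕ) : ℤ) = (k:ℤ) - (i:ℤ) := by omega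
    have c2 : ((μ - 1 : ℕ) : ℤ) = (μ:ℤ) - 1 := by omega
    rw [c1, c2]
    module
  · rintro ⟨i, h1, h2, rfl⟩
    refine ⟨a + ((k - i : ℕ):ℤ) • d + ((μ - 1 : ℕ):ℤ) • b, ⟨k - i, by omega, by omega, rfl⟩, ?_⟩
    have c1 : ((k - i : ℕ) : ℤ) = (k:ℤ) - (i:ℤ) := by omega
    have c2 : ((μ - 1 : ℕ) : ℤ) = (μ:ℤ) - 1 := by omega
    rw [c1, c2]
    module
end
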